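/- arXiv:1905.07986 — 2 statements merged into one kernel-verified Lean document; each statement's English description precedes it below -/
import Mathlib

section
/- Let k ≥ 1 and for each j ∈ {1, …, k} let R_j be a finite set of rectangles r = (w_r, h_r) with widths 1/2 ≤ w_r ≤ 1 and heights 0 < h_r ≤ 1. Suppose that for every j with 2 ≤ j ≤ k one has (∑_{r∈R_{j-1}} h_r) + (∑_{r∈R_j} h_r) > 1. Then ∑_{j=1}^{k} ∑_{r∈R_j} w_r · h_r ≥ k/4 − 2. (This is the case i = 0 of the volume bound for containers of type γ_0 in the shelf algorithm for Strip Packing: the total item volume in the containers of type γ_0 is at least one quarter of the total container height minus 2^{-0+1} = 2.) -/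
/-- Volume bound for containers of type γ₀ in the shelf algorithm for Strip Packing:
if each rectangle has width in [1/2,1] and height in (0,1], and the item heights of any
two consecutive containers sum to more than 1, then the total item volume is at least
k/4 − 2. -/
theorem stmt_4 {ι : Type*} (k : ℕ) (hk : 1 ≤ k)
    (R : ℕ → Finset ι) (w h : ι → ℝ)
    (hw : ∀ j ∈ Finset.Icc 1 k, ∀ r ∈ R j, 1/2 ≤ w r ∧ w r ≤ 1)
    (hh : ∀ j ∈ Finset.Icc 1 k, ∀ r ∈ R j, 0 < h r ∧ h r ≤ 1)
    (hcons : ∀ j, 2 ≤ j → j ≤ k → (∑ r ∈ R (j - 1), h r) + (∑ r ∈ R j, h r) > 1) :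
    ∑ j ∈ Finset.Icc 1 k, ∑ r ∈ R j, w r * h r ≥ (k : ℝ) / 4 - 2 := by
  set H : ℕ → ℝ := fun j => ∑ r ∈ R j, h r with hH
  have hHnonneg : ∀ j ∈ Finset.Icc 1 k, 0 ≤ H j := by
    intro j hj
    exact Finset.sum_nonneg fun r hr => le_of_lt (hh j hj r hr).1
  -- volume ≥ H j / 2 on each shelf
  have hvol : ∀ j ∈ Finset.Icc 1 k, H j / 2 ≤ ∑ r ∈ R j, w r * h r := by
    intro j hj
    have : ∑ r ∈ R j, (1/2) * h r ≤ ∑ r ∈ R j, w r * h r := by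
      refine Finset.sum_le_sum fun r hr => ?_
      exact mul_le_mul_of_nonneg_right (hw j hj r hr).1 (le_of_lt (hh j hj r hr).1)
    calc H j / 2 = ∑ r ∈ R j, (1/2) * h r := by
          rw [← Finset.mul_sum]; ring
      _ ≤ _ := this
  set S : ℝ := ∑ j ∈ Finset.Icc 1 k, H j with hS
  have hmain : (k : ℝ) - 1 ≤ 2 * S := by
    have hA : (k : ℝ) - 1 ≤ ∑ j ∈ Finset.Icc 2 k, (H (j - 1) + H j) := by
      have : ∀ j ∈ Finset.Icc 2 k, (1 : ℝ) ≤ H (j - 1) + H j := by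
        intro j hj
        rw [Finset.mem_Icc] at hj
        exact le_of_lt (hcons j hj.1 hj.2)
      calc (k : ℝ) - 1 = (Finset.Icc 2 k).card • (1 : ℝ) := by
            rw [Nat.card_Icc]
            simp [Nat.cast_sub hk]
        _ ≤ _ := Finset.card_nsmul_le_sum _ _ _ this
    have hB : ∑ j ∈ Finset.Icc 2 k, H (j - 1) ≤ S := by
      have heq : ∑ j ∈ Finset.Icc 2 k, H (j - 1) = ∑ j ∈ Finset.Icc 1 (k - 1), H j := by
        refine Finset.sum_nbij' (fun j => j - 1) (fun j => j + 1) ?_ ?_ ?_ ?_ ?_ <;>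
          intro a ha <;> simp only [Finset.mem_Icc] at * <;> omega
      rw [heq]
      refine Finset.sum_le_sum_of_subset_of_nonneg ?_ ?_
      · apply Finset.Icc_subset_Icc_right; omega
      · intro j hj _; exact hHnonneg j hj
    have hC : ∑ j ∈ Finset.Icc 2 k, H j ≤ S := by
      refine Finset.sum_le_sum_of_subset_of_nonneg ?_ ?_
      · apply Finset.Icc_subset_Icc_left; omega
      · intro j hj _; exact hHnonneg j hj
    have := Finset.sum_add_distrib (s := Finset.Icc 2 k) (f := fun j => H (j - 1)) (g := H)
    rw [this] at hA
    linarith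
  have h1 : S / 2 ≤ ∑ j ∈ Finset.Icc 1 k, ∑ r ∈ R j, w r * h r := by
    calc S / 2 = ∑ j ∈ Finset.Icc 1 k, H j / 2 := by
          rw [hS, Finset.sum_div]
      _ ≤ _ := Finset.sum_le_sum hvol
  linarith
end

section
/- Let i ≥ 1, k ≥ 1, and for each j ∈ {1, …, k} let R_j be a finite set of rectangles r = (w_r, h_r) with widths w_r > 0 and heights 2^{-i} < h_r ≤ 2^{-i+1}. Suppose that for every j with 2 ≤ j ≤ k one has (∑_{r∈R_{j-1}} w_r) + (∑_{r∈R_j} w_r) > 1. Then ∑_{j=1}^{k} ∑_{r∈R_j} w_r · h_r ≥ (1/4) · k · 2^{-i+1} − 2^{-i+1}. (This is the case i ≥ 1 of the volume bound for containers of type γ_i in the shelf algorithm for Strip Packing: the total item volume is at least one quarter of the total container height ∑_j h(c_j) = k·2^{-i+1} minus 2^{-i+1}.) -/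
/-- Volume bound for containers of type γ_i (i ≥ 1) in the shelf algorithm for Strip
Packing: if each rectangle has positive width and height in (2^{-i}, 2^{-i+1}], and the
item widths of any two consecutive containers sum to more than 1, then the total item
volume is at least (1/4)·k·2^{-i+1} − 2^{-i+1}. -/
theorem stmt_5 {ι : Type*} (i k : ℕ) (hi : 1 ≤ i) (hk : 1 ≤ k)
    (R : ℕ → Finset ι) (w h : ι → ℝ)
    (hw : ∀ j ∈ Finset.Icc 1 k, ∀ r ∈ R j, 0 < w r)
    (hh : ∀ j ∈ Finset.Icc 1 k, ∀ r ∈ R j,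
      (2:ℝ) ^ (-(i:ℤ)) < h r ∧ h r ≤ (2:ℝ) ^ (-(i:ℤ) + 1))
    (hcons : ∀ j, 2 ≤ j → j ≤ k → (∑ r ∈ R (j - 1), w r) + (∑ r ∈ R j, w r) > 1) :
    ∑ j ∈ Finset.Icc 1 k, ∑ r ∈ R j, w r * h r
      ≥ (1/4) * (k : ℝ) * (2:ℝ) ^ (-(i:ℤ) + 1) - (2:ℝ) ^ (-(i:ℤ) + 1) := by
  set W : ℕ → ℝ := fun j => ∑ r ∈ R j, w r with hWdef
  have hW0 : ∀ j ∈ Finset.Icc 1 k, 0 ≤ W j := fun j hj =>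
    Finset.sum_nonneg fun r hr => (hw j hj r hr).le
  set S : ℝ := ∑ j ∈ Finset.Icc 1 k, W j with hSdef
  -- shift: ∑_{j∈Icc 2 k} W (j-1) = ∑_{j∈Icc 1 (k-1)} W j
  have hshift : ∑ j ∈ Finset.Icc 2 k, W (j - 1) = ∑ j ∈ Finset.Icc 1 (k - 1), W j := by
    apply Finset.sum_nbij' (fun j => j - 1) (fun j => j + 1)
    · intro a ha
      simp only [Finset.mem_Icc] at ha ⊢
      omega
    · intro a ha
      simp only [Finset.mem_Icc] at ha ⊢
      omega
    · intro a ha; simp only [Finset.mem_Icc] at ha; omega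
    · intro a ha; simp only [Finset.mem_Icc] at ha; omega
    · intro a ha; rfl
  have hsub1 : ∑ j ∈ Finset.Icc 1 (k - 1), W j ≤ S :=
    Finset.sum_le_sum_of_subset_of_nonneg
      (Finset.Icc_subset_Icc_right (Nat.sub_le k 1)) (fun j hj _ => hW0 j hj)
  have hsub2 : ∑ j ∈ Finset.Icc 2 k, W j ≤ S :=
    Finset.sum_le_sum_of_subset_of_nonneg
      (Finset.Icc_subset_Icc_left (by norm_num)) (fun j hj _ => hW0 j hj)
  have hone : ∀ j ∈ Finset.Icc 2 k, (1:ℝ) ≤ W (j - 1) + W j := by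
    intro j hj
    rw [Finset.mem_Icc] at hj
    exact (hcons j hj.1 hj.2).le
  have hcard : (Finset.Icc 2 k).card = k - 1 := by
    rw [Nat.card_Icc]; omega
  have hsum : ((k : ℝ) - 1) ≤ ∑ j ∈ Finset.Icc 2 k, (W (j - 1) + W j) := by
    have := Finset.card_nsmul_le_sum (Finset.Icc 2 k) (fun j => W (j - 1) + W j) 1 hone
    rw [hcard, nsmul_eq_mul, mul_one] at this
    calc ((k : ℝ) - 1) ≤ ((k - 1 : ℕ) : ℝ) := by
          have : (1:ℕ) ≤ k := hk
          push_cast [Nat.cast_sub this]; linarith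
      _ ≤ _ := this
  have hkey : (k : ℝ) - 1 ≤ 2 * S := by
    rw [Finset.sum_add_distrib, hshift] at hsum
    linarith
  -- lower bound volumes by widths times 2^{-i}
  have hpow : (0:ℝ) < (2:ℝ) ^ (-(i:ℤ)) := by positivity
  have hvol : (2:ℝ) ^ (-(i:ℤ)) * S ≤ ∑ j ∈ Finset.Icc 1 k, ∑ r ∈ R j, w r * h r := by
    rw [hSdef, Finset.mul_sum]
    apply Finset.sum_le_sum
    intro j hj
    rw [hWdef]
    simp only
    rw [Finset.mul_sum]
    apply Finset.sum_le_sum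
    intro r hr
    rw [mul_comm]
    exact mul_le_mul_of_nonneg_left ((hh j hj r hr).1.le) (hw j hj r hr).le
  have hpow2 : (2:ℝ) ^ (-(i:ℤ) + 1) = 2 * (2:ℝ) ^ (-(i:ℤ)) := by
    rw [zpow_add₀ (by norm_num : (2:ℝ) ≠ 0)]; ring
  rw [ge_iff_le, hpow2]
  nlinarith [hpow, hkey, hvol]
end
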